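/- arXiv:2011.07408 — 3 statements merged into one kernel-verified Lean document; each statement's English description precedes it below -/
import Mathlib

section
/- Let F = F_2, m ≥ 1, and n ≥ 2, and let S_n act on V = F_2^n by permuting coordinates and diagonally on V^m. Then S_{n,m} = {σ_{2^r}(α) | r ≥ 0, |α| ≥ 1, r + |α| − 1 ≤ ⌊log_2(n)⌋, α_j ∈ {0,1} for 1 ≤ j ≤ m} is a separating set for F_2[V^m]^{S_n} that is minimal with respect to inclusion: no proper subset of S_{n,m} is separating. -/
open MvPolynomial

/-- The elementary multisymmetric polynomial
`σ_t(α) = Σ_{i_1 < … < i_t} x^α_{i_1} ⋯ x^α_{i_t}`, where `x^α_i = ∏_j x(j)_i^{α_j}`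
and the variable `x(j)_i` is indexed by the pair `(j, i)`. -/
noncomputable def msym {F : Type*} [CommSemiring F] (n m : ℕ) (t : ℕ) (α : Fin m → ℕ) :
    MvPolynomial (Fin m × Fin n) F :=
  ∑ s ∈ Finset.powersetCard t (Finset.univ : Finset (Fin n)),
    ∏ i ∈ s, ∏ j, (X (j, i) : MvPolynomial (Fin m × Fin n) F) ^ (α j)

/-- The set
`S_{n,m} = {σ_{2^r}(α) | r ≥ 0, |α| ≥ 1, r + |α| - 1 ≤ ⌊log_2 n⌋, α_j ∈ {0,1}}`. -/
noncomputable def Snm (n m : ℕ) : Set (MvPolynomial (Fin m × Fin n) (ZMod 2)) :=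
  {f | ∃ (r : ℕ) (α : Fin m → ℕ), (∀ j, α j ≤ 1) ∧ 1 ≤ ∑ j, α j ∧
      r + (∑ j, α j) - 1 ≤ Nat.log 2 n ∧ f = msym n m (2 ^ r) α}

/-- A set of polynomials is separating for `F_2[V^m]^{S_n}` if it separates any two
points of `V^m` lying in different `S_n`-orbits (for the diagonal permutation action). -/
def IsSepMulti (n m : ℕ) (S : Set (MvPolynomial (Fin m × Fin n) (ZMod 2))) : Prop :=
  ∀ u v : Fin m × Fin n → ZMod 2,
    (¬ ∃ σ : Equiv.Perm (Fin n), ∀ p : Fin m × Fin n, u (p.1, σ p.2) = v p) →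
    ∃ f ∈ S, eval u f ≠ eval v f

/-!
A point of `V^m` is determined up to `S_n` by the multiset of its `n` columns in `F_2^m`. For the
indicator `α` of a nonempty `S ⊆ {1, …, m}`, `σ_t(α)` evaluates to `N_S choose t` (mod 2), where
`N_S = onesCount S` counts the columns that are `1` on all of `S`; by Lucas, `σ_{2^r}(α)` is
bit `r` of `N_S`. So `S_{n,m}` knows every `N_S` modulo `2^(⌊log₂ n⌋ + 2 - |S|)`, and these
congruences already determine a multiset of fewer than `2^(⌊log₂ n⌋ + 1)` vectors. Conversely,
for each element `σ_{2^r}(α)` there are two column multisets with the same `N_S` for all `S`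
except the support of `α`, where they differ by exactly `2^r`.
-/
namespace MultisymSep

open Finset

section Counting

variable {ι : Type*}

def onesCount (S : Finset ι) (A : Multiset (ι → ZMod 2)) : ℕ :=
  Multiset.card (A.filter fun w => ∀ j ∈ S, w j = 1)

lemma onesCount_empty (A : Multiset (ι → ZMod 2)) : onesCount ∅ A = Multiset.card A := by
  simp [onesCount]

lemma onesCount_add (S : Finset ι) (A B : Multiset (ι → ZMod 2)) :
    onesCount S (A + B) = onesCount S A + onesCount S B := by
  simp [onesCount, Multiset.filter_add]

lemma onesCount_le_card (S : Finset ι) (A : Multiset (ι → ZMod 2)) :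
    onesCount S A ≤ Multiset.card A :=
  Multiset.card_le_card (Multiset.filter_le _ _)

lemma onesCount_filter_eq_one [DecidableEq ι] (a : ι) (S : Finset ι)
    (A : Multiset (ι → ZMod 2)) :
    onesCount S (A.filter (· a = 1)) = onesCount (insert a S) A := by
  simp only [onesCount, Multiset.filter_filter, forall_mem_insert, and_comm]

lemma onesCount_replicate (S : Finset ι) (c : ℕ) (w : ι → ZMod 2) :
    onesCount S (Multiset.replicate c w) = if ∀ j ∈ S, w j = 1 then c else 0 := by
  split_ifs with h
  · rw [onesCount, Multiset.filter_eq_self.2 fun x hx => Multiset.eq_of_mem_replicate hx ▸ h,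
      Multiset.card_replicate]
  · rw [onesCount, Multiset.filter_eq_nil.2 fun x hx => Multiset.eq_of_mem_replicate hx ▸ h,
      Multiset.card_zero]

lemma onesCount_sum {κ : Type*} (S : Finset ι) (P : Finset κ) (A : κ → Multiset (ι → ZMod 2)) :
    onesCount S (∑ k ∈ P, A k) = ∑ k ∈ P, onesCount S (A k) := by
  induction P using Finset.cons_induction with
  | empty => simp [onesCount]
  | cons k P hk ih => rw [sum_cons, sum_cons, onesCount_add, ih]

lemma onesCount_map {κ : Type*} (S : Finset ι) (M : Multiset κ) (f : κ → ι → ZMod 2) :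
    onesCount S (M.map f) = Multiset.card (M.filter fun x => ∀ j ∈ S, f x j = 1) := by
  rw [onesCount, Multiset.filter_map, Multiset.card_map]
  rfl

lemma filter_eq_one_add_filter_eq_zero (a : ι) (A : Multiset (ι → ZMod 2)) :
    A.filter (· a = 1) + A.filter (· a = 0) = A := by
  conv_rhs => rw [← Multiset.filter_add_not (· a = 1) A]
  congr 1
  exact Multiset.filter_congr fun w _ => by generalize w a = x; revert x; decide

end Counting

section Reconstruction

variable {ι : Type*}

/-- The congruences recorded by the invariants `σ_{2^r}(α)`, `α` the indicator of `S ⊆ K`,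
with `r + |S| ≤ E`. -/
def OnesCountModEq (K : Finset ι) (E : ℕ) (A B : Multiset (ι → ZMod 2)) : Prop :=
  ∀ S ⊆ K, S.Nonempty → onesCount S A ≡ onesCount S B [MOD 2 ^ (E + 1 - #S)]

namespace OnesCountModEq

variable {K K' : Finset ι} {E E' : ℕ} {A B X X' Y Y' : Multiset (ι → ZMod 2)}

lemma refl (K : Finset ι) (E : ℕ) (A : Multiset (ι → ZMod 2)) : OnesCountModEq K E A A :=
  fun _ _ _ => Nat.ModEq.refl _

lemma mono (h : OnesCountModEq K E A B) (hK : K' ⊆ K) (hE : E' ≤ E) :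
    OnesCountModEq K' E' A B := fun S hS hne =>
  Nat.ModEq.of_dvd (pow_dvd_pow 2 (by omega)) (h S (hS.trans hK) hne)

lemma add_left_cancel (hX : OnesCountModEq K E X X')
    (h : OnesCountModEq K E (X + Y) (X' + Y')) : OnesCountModEq K E Y Y' := fun S hS hne => by
  have hXY := h S hS hne
  rw [onesCount_add, onesCount_add] at hXY
  exact Nat.ModEq.add_left_cancel (hX S hS hne) hXY

lemma add_right_cancel (hY : OnesCountModEq K E Y Y')
    (h : OnesCountModEq K E (X + Y) (X' + Y')) : OnesCountModEq K E X X' := by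
  rw [add_comm X, add_comm X'] at h
  exact hY.add_left_cancel h

lemma filter_eq_one [DecidableEq ι] {a : ι} (ha : a ∉ K)
    (h : OnesCountModEq (insert a K) E A B) :
    OnesCountModEq K (E - 1) (A.filter (· a = 1)) (B.filter (· a = 1)) := fun S hS hne => by
  have haS : a ∉ S := fun haS => ha (hS haS)
  have hcong := h (insert a S) (insert_subset_insert a hS) (insert_nonempty a S)
  rw [card_insert_of_notMem haS] at hcong
  rw [onesCount_filter_eq_one, onesCount_filter_eq_one]
  convert hcong using 2
  have := hne.card_pos
  omega

lemma card_filter_eq_one [DecidableEq ι] {a : ι} (h : OnesCountModEq (insert a K) E A B)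
    (hcard : Multiset.card A = Multiset.card B) (hlt : Multiset.card A < 2 ^ E) :
    Multiset.card (A.filter (· a = 1)) = Multiset.card (B.filter (· a = 1)) := by
  have hcong := h {a} (by simp) (singleton_nonempty a)
  rw [card_singleton, Nat.add_sub_cancel] at hcong
  have hA := (onesCount_le_card {a} A).trans_lt hlt
  have hB := (onesCount_le_card {a} B).trans_lt (hcard ▸ hlt)
  simpa [onesCount] using hcong.eq_of_lt_of_lt hA hB

end OnesCountModEq

lemma forall_eq_update_of_mem_filter [DecidableEq ι] {K : Finset ι} {c : ι → ZMod 2}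
    {A : Multiset (ι → ZMod 2)} {a : ι} (hA : ∀ w ∈ A, ∀ j ∉ insert a K, w j = c j) (b : ZMod 2) :
    ∀ w ∈ A.filter (· a = b), ∀ j ∉ K, w j = Function.update c a b j := by
  intro w hw j hj
  rw [Multiset.mem_filter] at hw
  by_cases hja : j = a
  · subst hja
    simp [hw.2]
  · rw [Function.update_of_ne hja]
    exact hA w hw.1 j (by simp [hja, hj])

/-- Induction on the set `K` of coordinates that may vary, splitting by the value of a new
coordinate `a`. One of the two halves has fewer than `2 ^ (E - 1)` elements, so it is determined
by the congruences one level down; subtracting it off, the other half is determined at level `E`. -/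
theorem eq_of_onesCountModEq [DecidableEq ι] (K : Finset ι) :
    ∀ (c : ι → ZMod 2) (E : ℕ) (A B : Multiset (ι → ZMod 2)),
      Multiset.card A = Multiset.card B → Multiset.card A < 2 ^ E →
      (∀ w ∈ A, ∀ j ∉ K, w j = c j) → (∀ w ∈ B, ∀ j ∉ K, w j = c j) →
      OnesCountModEq K E A B → A = B := by
  induction K using Finset.induction_on with
  | empty =>
    intro c E A B hcard _ hA hB _
    have hc : ∀ M : Multiset (ι → ZMod 2), (∀ w ∈ M, ∀ j ∉ (∅ : Finset ι), w j = c j) →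
        M = Multiset.replicate (Multiset.card M) c := fun M hM =>
      Multiset.eq_replicate_card.2 fun w hw => funext fun j => hM w hw j (notMem_empty j)
    rw [hc A hA, hc B hB, hcard]
  | insert a K haK ih =>
    intro c E A B hcard hlt hA hB h
    have hsplitA := filter_eq_one_add_filter_eq_zero a A
    have hsplitB := filter_eq_one_add_filter_eq_zero a B
    have hsumA := congrArg Multiset.card hsplitA
    have hsumB := congrArg Multiset.card hsplitB
    rw [Multiset.card_add] at hsumA hsumB
    have hcard1 := h.card_filter_eq_one hcard hlt
    have hcard0 : Multiset.card (A.filter (· a = 0)) = Multiset.card (B.filter (· a = 0)) := by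
      omega
    have h1 := h.filter_eq_one haK
    have hK : OnesCountModEq K E (A.filter (· a = 1) + A.filter (· a = 0))
        (B.filter (· a = 1) + B.filter (· a = 0)) := by
      rw [hsplitA, hsplitB]
      exact h.mono (subset_insert a K) le_rfl
    have hpow : 2 ^ E ≤ 2 * 2 ^ (E - 1) := by
      rw [← pow_succ']
      exact Nat.pow_le_pow_right two_pos (by omega)
    rw [← hsplitA, ← hsplitB]
    by_cases hsmall : Multiset.card (A.filter (· a = 1)) < 2 ^ (E - 1)
    · have e1 := ih _ (E - 1) _ _ hcard1 hsmall (forall_eq_update_of_mem_filter hA 1)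
        (forall_eq_update_of_mem_filter hB 1) h1
      rw [e1] at hK ⊢
      rw [ih _ E _ _ hcard0 (by omega) (forall_eq_update_of_mem_filter hA 0)
        (forall_eq_update_of_mem_filter hB 0) ((OnesCountModEq.refl _ _ _).add_left_cancel hK)]
    · have e0 := ih _ (E - 1) _ _ hcard0 (by omega) (forall_eq_update_of_mem_filter hA 0)
        (forall_eq_update_of_mem_filter hB 0) (h1.add_left_cancel (hK.mono subset_rfl (by omega)))
      rw [e0] at hK ⊢
      rw [ih _ E _ _ hcard1 (by omega) (forall_eq_update_of_mem_filter hA 1)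
        (forall_eq_update_of_mem_filter hB 1) ((OnesCountModEq.refl _ _ _).add_right_cancel hK)]

end Reconstruction

section Bits

lemma choose_two_pow_modEq (r N : ℕ) : N.choose (2 ^ r) ≡ N / 2 ^ r [MOD 2] := by
  induction r generalizing N with
  | zero => simp [Nat.ModEq.refl]
  | succ r ih =>
    have : Fact (Nat.Prime 2) := ⟨Nat.prime_two⟩
    calc N.choose (2 ^ (r + 1))
        ≡ (N % 2).choose (2 ^ (r + 1) % 2) * (N / 2).choose (2 ^ (r + 1) / 2) [MOD 2] :=
          Choose.choose_modEq_choose_mod_mul_choose_div_nat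
      _ = (N / 2).choose (2 ^ r) := by simp [pow_succ]
      _ ≡ N / 2 / 2 ^ r [MOD 2] := ih _
      _ = N / 2 ^ (r + 1) := by rw [Nat.div_div_eq_div_mul, ← pow_succ']

lemma natCast_choose_two_pow (r N : ℕ) :
    ((N.choose (2 ^ r) : ℕ) : ZMod 2) = ((N / 2 ^ r : ℕ) : ZMod 2) :=
  (ZMod.natCast_eq_natCast_iff _ _ _).2 (choose_two_pow_modEq r N)

lemma modEq_two_pow_of_forall_div_modEq {N₁ N₂ e : ℕ}
    (h : ∀ r < e, N₁ / 2 ^ r ≡ N₂ / 2 ^ r [MOD 2]) : N₁ ≡ N₂ [MOD 2 ^ e] := by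
  refine Nat.eq_of_testBit_eq fun i => ?_
  simp only [Nat.testBit_mod_two_pow]
  by_cases hi : i < e
  · have := h i hi
    simp only [Nat.ModEq] at this
    simp [hi, Nat.testBit_eq_decide_div_mod_eq, this]
  · simp [hi]

lemma natCast_two_pow_div_two_pow {r r' : ℕ} (h : r' ≠ r) :
    ((2 ^ r / 2 ^ r' : ℕ) : ZMod 2) = 0 := by
  rcases h.lt_or_gt with h | h
  · rw [Nat.pow_div h.le two_pos, ← Nat.sub_add_cancel (Nat.sub_pos_of_lt h), pow_succ]
    push_cast
    exact mul_eq_zero_of_right _ rfl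
  · rw [Nat.div_eq_of_lt (Nat.pow_lt_pow_right one_lt_two h), Nat.cast_zero]

end Bits

section Columns

variable {n m : ℕ}

def columns (u : Fin m × Fin n → ZMod 2) : Multiset (Fin m → ZMod 2) :=
  univ.val.map fun i j => u (j, i)

lemma card_columns (u : Fin m × Fin n → ZMod 2) : Multiset.card (columns u) = n := by
  simp [columns]

lemma exists_perm_iff_columns_eq (u v : Fin m × Fin n → ZMod 2) :
    (∃ σ : Equiv.Perm (Fin n), ∀ p : Fin m × Fin n, u (p.1, σ p.2) = v p) ↔
      columns u = columns v := by
  constructor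
  · rintro ⟨σ, hσ⟩
    have hv : (fun i j => v (j, i)) = (fun i j => u (j, i)) ∘ σ := by
      funext i j
      exact (hσ (j, i)).symm
    rw [columns, columns, hv, ← Multiset.map_map, Multiset.map_univ_val_equiv]
  · intro h
    have hcount : ∀ (f : Fin n → Fin m → ZMod 2) (c : Fin m → ZMod 2),
        Fintype.card {i // f i = c} = Multiset.count c (univ.val.map f) := by
      intro f c
      rw [Fintype.card_subtype, Multiset.count_map, card_def, filter_val]
      simp only [eq_comm]
    have hfib : ∀ c : Fin m → ZMod 2, Fintype.card {i // (fun j => v (j, i)) = c} =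
        Fintype.card {i // (fun j => u (j, i)) = c} := fun c => by
      rw [hcount, hcount]
      exact congrArg (Multiset.count c) h.symm
    refine ⟨Equiv.ofFiberEquiv fun c => Fintype.equivOfCardEq (hfib c), fun p => ?_⟩
    exact congrFun (Equiv.ofFiberEquiv_map (f := fun i j => v (j, i)) (g := fun i j => u (j, i))
      _ p.2) p.1

lemma exists_columns_eq (M : Multiset (Fin m → ZMod 2)) (h : Multiset.card M = n) :
    ∃ u : Fin m × Fin n → ZMod 2, columns u = M := by
  let e : Fin n ≃ M := (Fintype.equivFinOfCardEq (by rw [Multiset.card_coe, h])).symm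
  refine ⟨fun p => (e p.2 : Fin m → ZMod 2) p.1, ?_⟩
  calc columns _ = (univ.val.map e).map (fun x : M => (x : Fin m → ZMod 2)) := by
        rw [columns, Multiset.map_map]; rfl
    _ = M := by rw [Multiset.map_univ_val_equiv, Multiset.map_univ_coe]

lemma onesCount_columns (S : Finset (Fin m)) (u : Fin m × Fin n → ZMod 2) :
    onesCount S (columns u) = #{i | ∀ j ∈ S, u (j, i) = 1} := by
  rw [columns, onesCount_map, card_def, filter_val]
  congr

end Columns

section Invariants

variable {n m : ℕ}

lemma prod_zmod_two_eq_ite {κ : Type*} (s : Finset κ) (f : κ → ZMod 2) :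
    ∏ j ∈ s, f j = if ∀ j ∈ s, f j = 1 then 1 else 0 := by
  rw [← prod_boole]
  refine prod_congr rfl fun j _ => ?_
  generalize f j = x
  revert x
  decide

lemma eval_msym_indicator (u : Fin m × Fin n → ZMod 2) (S : Finset (Fin m)) (t : ℕ) :
    eval u (msym n m t ((S : Set (Fin m)).indicator 1)) =
      ((onesCount S (columns u)).choose t : ZMod 2) := by
  set G : Finset (Fin n) := {i | ∀ j ∈ S, u (j, i) = 1}
  have hcol : ∀ i, ∏ j, u (j, i) ^ (S : Set (Fin m)).indicator 1 j = if i ∈ G then 1 else 0 := by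
    intro i
    simp only [Set.indicator_apply, mem_coe, Pi.one_apply, pow_ite, pow_one, pow_zero,
      prod_ite_mem, univ_inter, prod_zmod_two_eq_ite, G, mem_filter, mem_univ, true_and]
    congr
  have hsub : {s ∈ powersetCard t (univ : Finset (Fin n)) | ∀ i ∈ s, i ∈ G} =
      powersetCard t G := by
    ext s
    simp only [mem_filter, mem_powersetCard, subset_univ, true_and, and_comm]
    rfl
  simp only [msym, map_sum, map_prod, map_pow, eval_X, hcol, prod_boole]
  rw [onesCount_columns, ← card_powersetCard, ← hsub, natCast_card_filter]
  congr! 2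

lemma mem_Snm_iff (f : MvPolynomial (Fin m × Fin n) (ZMod 2)) :
    f ∈ Snm n m ↔ ∃ (r : ℕ) (S : Finset (Fin m)), S.Nonempty ∧ r + #S ≤ Nat.log 2 n + 1 ∧
      f = msym n m (2 ^ r) ((S : Set (Fin m)).indicator 1) := by
  have hsum : ∀ S : Finset (Fin m), ∑ j, (S : Set (Fin m)).indicator 1 j = #S := fun S => by
    simp [Set.indicator_apply]
  constructor
  · rintro ⟨r, α, hα, hpos, hle, rfl⟩
    have hαS : α = (({j | α j = 1} : Finset (Fin m)) : Set (Fin m)).indicator 1 := by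
      funext j
      have := hα j
      by_cases h : α j = 1
      · simp [h]
      · have h0 : α j = 0 := by omega
        simp [h0]
    rw [hαS, hsum] at hpos hle
    exact ⟨r, _, card_pos.1 hpos, by omega, by rw [← hαS]⟩
  · rintro ⟨r, S, hS, hle, rfl⟩
    have := hS.card_pos
    refine ⟨r, _, fun j => ?_, by rw [hsum]; omega, by rw [hsum]; omega, rfl⟩
    by_cases h : j ∈ S <;> simp [h]

lemma eval_msym_two_pow_indicator (u : Fin m × Fin n → ZMod 2) (S : Finset (Fin m)) (r : ℕ) :
    eval u (msym n m (2 ^ r) ((S : Set (Fin m)).indicator 1)) =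
      ((onesCount S (columns u) / 2 ^ r : ℕ) : ZMod 2) := by
  rw [eval_msym_indicator, natCast_choose_two_pow]

end Invariants

theorem isSepMulti_Snm (n m : ℕ) : IsSepMulti n m (Snm n m) := by
  intro u v hne
  by_contra! heval
  refine hne ((exists_perm_iff_columns_eq u v).2 ?_)
  refine eq_of_onesCountModEq univ 0 (Nat.log 2 n + 1) _ _
    (by rw [card_columns, card_columns])
    (by rw [card_columns]; exact Nat.lt_pow_succ_log_self one_lt_two n)
    (by simp) (by simp) fun S _ hS => modEq_two_pow_of_forall_div_modEq fun r hr => ?_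
  have h := heval _ ((mem_Snm_iff _).2 ⟨r, S, hS, by omega, rfl⟩)
  rwa [eval_msym_two_pow_indicator, eval_msym_two_pow_indicator,
    ZMod.natCast_eq_natCast_iff] at h

section Minimality

variable {ι : Type*}

lemma card_powerset_filter_even_eq {D : Finset ι} (hD : D.Nonempty) :
    #{U ∈ D.powerset | Even #U} = #{U ∈ D.powerset | ¬Even #U} := by
  have h := sum_powerset_neg_one_pow_card_of_nonempty hD
  rw [← sum_filter_add_sum_filter_not _ (fun U => Even #U),
    sum_congr rfl fun U hU => (mem_filter.1 hU).2.neg_one_pow,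
    sum_congr rfl fun U hU => (Nat.not_even_iff_odd.1 (mem_filter.1 hU).2).neg_one_pow] at h
  simp only [sum_const, nsmul_eq_mul, mul_one, mul_neg] at h
  omega

lemma onesCount_sum_replicate_indicator_sdiff [DecidableEq ι] (S S₀ : Finset ι)
    (p : Finset ι → Prop) [DecidablePred p] (c : ℕ) :
    onesCount S (∑ U ∈ S₀.powerset with p U,
        Multiset.replicate c ((↑(S₀ \ U) : Set ι).indicator 1)) =
      if S ⊆ S₀ then c * #{U ∈ (S₀ \ S).powerset | p U} else 0 := by
  have hind : ∀ U, (∀ j ∈ S, (↑(S₀ \ U) : Set ι).indicator (1 : ι → ZMod 2) j = 1) ↔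
      S ⊆ S₀ \ U := fun U => by
    simp only [Set.indicator_apply, coe_sdiff, Set.mem_sdiff, mem_coe, Pi.one_apply,
      ite_eq_left_iff, zero_ne_one, imp_false, not_not, subset_iff, mem_sdiff]
  simp only [onesCount_sum, onesCount_replicate, hind, sum_ite, sum_const_zero, add_zero,
    sum_const, smul_eq_mul, filter_filter]
  split_ifs with hS
  · rw [mul_comm]
    congr 2
    ext U
    simp only [mem_filter, mem_powerset, subset_sdiff, disjoint_comm (a := S)]
    tauto
  · refine mul_eq_zero_of_left (card_eq_zero.2 (filter_eq_empty_iff.2 ?_)) c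
    exact fun U _ h => hS (h.2.trans sdiff_subset)

/-- Take `2 ^ r` copies of the indicator of each `T ⊆ S₀`, sorted by the parity of `#(S₀ \ T)`,
and pad with zero vectors: inclusion–exclusion over `S ⊆ T ⊆ S₀` cancels unless `S = S₀`. -/
lemma exists_onesCount_eq_of_ne [DecidableEq ι] {S₀ : Finset ι} (hS₀ : S₀.Nonempty) (r : ℕ)
    {N : ℕ} (hN : 2 ^ (r + #S₀ - 1) ≤ N) :
    ∃ A B : Multiset (ι → ZMod 2), Multiset.card A = N ∧ Multiset.card B = N ∧
      onesCount S₀ A = 2 ^ r ∧ onesCount S₀ B = 0 ∧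
      ∀ S, S.Nonempty → S ≠ S₀ → onesCount S A = onesCount S B := by
  have hk := hS₀.card_pos
  set A := ∑ U ∈ S₀.powerset with Even #U,
    Multiset.replicate (2 ^ r) ((↑(S₀ \ U) : Set ι).indicator (1 : ι → ZMod 2))
  set B := ∑ U ∈ S₀.powerset with ¬Even #U,
    Multiset.replicate (2 ^ r) ((↑(S₀ \ U) : Set ι).indicator (1 : ι → ZMod 2))
  have hA : ∀ S, onesCount S A =
      if S ⊆ S₀ then 2 ^ r * #{U ∈ (S₀ \ S).powerset | Even #U} else 0 :=
    fun S => onesCount_sum_replicate_indicator_sdiff _ _ _ _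
  have hB : ∀ S, onesCount S B =
      if S ⊆ S₀ then 2 ^ r * #{U ∈ (S₀ \ S).powerset | ¬Even #U} else 0 :=
    fun S => onesCount_sum_replicate_indicator_sdiff _ _ _ _
  have heven := card_powerset_filter_even_eq hS₀
  have hcard : 2 ^ r * #{U ∈ S₀.powerset | Even #U} = 2 ^ (r + #S₀ - 1) := by
    have hsum := card_filter_add_card_filter_not (s := S₀.powerset) (fun U => Even #U)
    have h2 : 2 ^ #S₀ = 2 * 2 ^ (#S₀ - 1) := by
      rw [← pow_succ']
      congr 1
      omega
    rw [card_powerset] at hsum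
    rw [show #{U ∈ S₀.powerset | Even #U} = 2 ^ (#S₀ - 1) by omega, ← pow_add]
    congr 1
    omega
  set pad := Multiset.replicate (N - 2 ^ (r + #S₀ - 1)) (0 : ι → ZMod 2)
  have hpad : ∀ S : Finset ι, S.Nonempty → onesCount S pad = 0 := fun S hS => by
    obtain ⟨j, hj⟩ := hS
    rw [onesCount_replicate, if_neg fun h => zero_ne_one (h j hj)]
  refine ⟨pad + A, pad + B, ?_, ?_, ?_, ?_, ?_⟩
  · rw [← onesCount_empty, onesCount_add, hA, onesCount_empty, if_pos (empty_subset _),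
      sdiff_empty, hcard]
    simp [hN, pad]
  · rw [← onesCount_empty, onesCount_add, hB, onesCount_empty, if_pos (empty_subset _),
      sdiff_empty, ← heven, hcard]
    simp [hN, pad]
  · simp [onesCount_add, hpad S₀ hS₀, hA, filter_singleton]
  · simp [onesCount_add, hpad S₀ hS₀, hB]
  · intro S hS hne
    rw [onesCount_add, onesCount_add, hA, hB]
    split_ifs with hsub
    · rw [card_powerset_filter_even_eq (sdiff_nonempty.2 fun h => hne (subset_antisymm hsub h))]
    · rfl

end Minimality

theorem exists_only_separated_by {n m : ℕ} (hn : n ≠ 0)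
    {f₀ : MvPolynomial (Fin m × Fin n) (ZMod 2)} (hf₀ : f₀ ∈ Snm n m) :
    ∃ u v : Fin m × Fin n → ZMod 2,
      (¬ ∃ σ : Equiv.Perm (Fin n), ∀ p : Fin m × Fin n, u (p.1, σ p.2) = v p) ∧
      ∀ g ∈ Snm n m, g ≠ f₀ → eval u g = eval v g := by
  obtain ⟨r, S₀, hS₀, hle, rfl⟩ := (mem_Snm_iff _).1 hf₀
  have hN : 2 ^ (r + #S₀ - 1) ≤ n :=
    (Nat.pow_le_pow_right two_pos (by omega)).trans (Nat.pow_log_le_self 2 hn)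
  obtain ⟨A, B, hA, hB, hA₀, hB₀, hAB⟩ := exists_onesCount_eq_of_ne hS₀ r hN
  obtain ⟨u, rfl⟩ := exists_columns_eq A hA
  obtain ⟨v, rfl⟩ := exists_columns_eq B hB
  refine ⟨u, v, fun h => ?_, fun g hg hne => ?_⟩
  · rw [exists_perm_iff_columns_eq] at h
    rw [h, hB₀] at hA₀
    exact (pow_pos two_pos r).ne' hA₀.symm
  · obtain ⟨r', S, hS, -, rfl⟩ := (mem_Snm_iff _).1 hg
    rw [eval_msym_two_pow_indicator, eval_msym_two_pow_indicator]
    by_cases hS' : S = S₀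
    · subst hS'
      have hr : r' ≠ r := fun h => hne (by rw [h])
      rw [hA₀, hB₀, natCast_two_pow_div_two_pow hr, Nat.zero_div, Nat.cast_zero]
    · rw [hAB S hS hS']

end MultisymSep

open MultisymSep in
theorem stmt17_general (n m : ℕ) (hn : 2 ≤ n) :
    IsSepMulti n m (Snm n m) ∧ ∀ T ⊂ Snm n m, ¬ IsSepMulti n m T := by
  refine ⟨isSepMulti_Snm n m, fun T hT hsep => ?_⟩
  obtain ⟨f₀, hf₀, hf₀T⟩ := Set.exists_of_ssubset hT
  obtain ⟨u, v, hne, heval⟩ := exists_only_separated_by (by omega) hf₀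
  obtain ⟨g, hg, hgne⟩ := hsep u v hne
  exact hgne (heval g (hT.subset hg) fun h => hf₀T (h ▸ hg))

/-- for `F = F_2`, `m ≥ 1` and `n ≥ 2`, the set `S_{n,m}` is a separating
set for `F_2[V^m]^{S_n}` which is minimal with respect to inclusion. -/
theorem stmt17 (n m : ℕ) (hm : 1 ≤ m) (hn : 2 ≤ n) :
    IsSepMulti n m (Snm n m) ∧ ∀ T ⊂ Snm n m, ¬ IsSepMulti n m T :=
  stmt17_general n m hn
end

section
/- For F = F_2, m ≥ 1 and n ≥ 2, the separating degree bound of the multisymmetric invariant ring is β_sep(F_2[V^m]^{S_n}) = 2^{⌊log_2(n)⌋}; that is, the homogeneous invariants of total degree at most 2^{⌊log_2(n)⌋} separate the S_n-orbits on V^m, and no smaller degree bound suffices. -/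
open MvPolynomial

/-- The set of all `S_n`-invariant homogeneous polynomials of total degree at most `d`
in `F_2[V^m]`. -/
def HomInvMulti (n m d : ℕ) : Set (MvPolynomial (Fin m × Fin n) (ZMod 2)) :=
  {f | (∀ σ : Equiv.Perm (Fin n),
          rename (fun p : Fin m × Fin n => (p.1, σ p.2)) f = f) ∧
       ∃ e ≤ d, f.IsHomogeneous e}

/-!
For `w ∈ F_2^m`, the invariant `e_k(w ⬝ x_1, …, w ⬝ x_n)` (elementary symmetric polynomial in
the linear forms `w ⬝ x_i` of the columns `x_i`) takes the value `binom(M_w, k) mod 2` at a point,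
where `M_w` is the number of its columns `c` with `w ⬝ c = 1`. By Lucas' theorem the values for
`k = 2^b ≤ n` are the binary digits of `M_w ≤ n`, so the invariants of degree at most
`2^⌊log₂ n⌋` determine every `M_w`. Counting pairs `(w, i)` with `w ⬝ x_i = w ⬝ c` inverts this
Fourier transform: the `M_w` determine how often each `c` occurs as a column, hence the orbit.

Conversely, let `D = 2^⌊log₂ n⌋` and let `u` have all entries `1` in a set `I` of `D` columns and
`0` elsewhere. For an invariant `f`, homogeneous of degree `0 < e < D`, `f(u)` is the sum of the
coefficients of the monomials whose columns lie in `I`. Grouped by their set `A ⊆ I` of columns,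
the contributions depend only on `|A| ∈ [1, e]` by invariance, and each occurs `binom(D, |A|)`
times, an even number. So `f(u) = 0 = f(0)`, although `u` and `0` lie in different orbits.
-/

open Finset

theorem Nat.choose_two_pow_mod_two (M b : ℕ) : M.choose (2 ^ b) % 2 = M / 2 ^ b % 2 := by
  induction b generalizing M with
  | zero => simp
  | succ b ih =>
    have lucas := Choose.choose_modEq_choose_mod_mul_choose_div_nat (p := 2) (n := M)
      (k := 2 ^ (b + 1))
    rw [pow_succ, Nat.mul_mod_left, Nat.mul_div_cancel _ two_pos, Nat.choose_zero_right,
      one_mul] at lucas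
    rw [pow_succ, lucas, ih, Nat.div_div_eq_div_mul, mul_comm 2]

theorem Nat.eq_of_forall_choose_two_pow_eq {k M M' : ℕ} (hM : M < 2 ^ (k + 1))
    (hM' : M' < 2 ^ (k + 1)) (h : ∀ b ≤ k, (M.choose (2 ^ b) : ZMod 2) = M'.choose (2 ^ b)) :
    M = M' := by
  refine Nat.eq_of_testBit_eq fun b => ?_
  rcases le_or_gt b k with hb | hb
  · have hbit := (ZMod.natCast_eq_natCast_iff' _ _ _).mp (h b hb)
    rw [Nat.choose_two_pow_mod_two, Nat.choose_two_pow_mod_two] at hbit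
    simp only [Nat.testBit_eq_decide_div_mod_eq, hbit]
  · have hk : 2 ^ (k + 1) ≤ 2 ^ b := Nat.pow_le_pow_right two_pos hb
    rw [Nat.testBit_lt_two_pow (hM.trans_le hk), Nat.testBit_lt_two_pow (hM'.trans_le hk)]

theorem ZMod.eq_ite_eq_one (x : ZMod 2) : x = if x = 1 then 1 else 0 := by
  revert x; decide

theorem ZMod.ne_zero_iff_eq_one {x : ZMod 2} : x ≠ 0 ↔ x = 1 := by
  revert x; decide

theorem exists_perm_comp_eq_of_card_fiber_eq {α β : Type*} [Fintype α] [DecidableEq β]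
    {f g : α → β} (h : ∀ b, #{a | f a = b} = #{a | g a = b}) :
    ∃ σ : Equiv.Perm α, f ∘ σ = g := by
  have e : ∀ b, {a // g a = b} ≃ {a // f a = b} := fun b =>
    Fintype.equivOfCardEq (by simp only [Fintype.card_subtype, h])
  exact ⟨Equiv.ofFiberEquiv e, funext (Equiv.ofFiberEquiv_map e)⟩

theorem Finset.exists_perm_image_eq {α : Type*} [DecidableEq α] {s t : Finset α}
    (h : #s = #t) : ∃ σ : Equiv.Perm α, s.image σ = t := by
  have := Set.powersetCard.isPretransitive (α := α) (n := #s)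
  obtain ⟨σ, hσ⟩ := MulAction.exists_smul_eq (Equiv.Perm α)
    (⟨s, rfl⟩ : Set.powersetCard α #s) ⟨t, h.symm⟩
  refine ⟨σ, ?_⟩
  have := congrArg Subtype.val hσ
  simpa [smul_finset_def] using this

namespace MvPolynomial

variable {σ R : Type*} [CommSemiring R] [Fintype σ]

theorem isHomogeneous_esymm (k : ℕ) : (esymm σ R k).IsHomogeneous k :=
  IsHomogeneous.sum _ _ _ fun K hK => by
    simpa [(mem_powersetCard.mp hK).2] using
      IsHomogeneous.prod K (fun i => (X i : MvPolynomial σ R)) (fun _ => 1)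
        fun i _ => isHomogeneous_X R i

theorem eval_indicator_esymm [DecidableEq σ] (A : Finset σ) (k : ℕ) :
    eval (fun i => if i ∈ A then 1 else 0) (esymm σ R k) = ((#A).choose k : R) := by
  simp only [esymm, map_sum, map_prod, eval_X, prod_boole, ← subset_iff]
  rw [sum_boole, ← card_powersetCard]
  congr 2
  ext K
  simp only [mem_filter, mem_powersetCard, subset_univ, true_and, and_comm]

end MvPolynomial

section Polarization

variable {ι κ R : Type*} [CommSemiring R] [Fintype ι] [Fintype κ]

noncomputable def polarizedEsymm (w : ι → R) (k : ℕ) : MvPolynomial (ι × κ) R :=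
  aeval (fun i : κ => ∑ j, C (w j) * X (j, i)) (esymm κ R k)

theorem polarizedEsymm_isHomogeneous (w : ι → R) (k : ℕ) :
    (polarizedEsymm (κ := κ) w k).IsHomogeneous k := by
  have hform : ∀ i : κ, (∑ j, C (w j) * X (j, i) : MvPolynomial (ι × κ) R).IsHomogeneous 1 :=
    fun i => IsHomogeneous.sum _ _ _ fun j _ => (isHomogeneous_X R (j, i)).C_mul (w j)
  have := (isHomogeneous_esymm (σ := κ) (R := R) k).aeval _ hform
  rwa [one_mul] at this

theorem rename_polarizedEsymm (w : ι → R) (k : ℕ) (σ : Equiv.Perm κ) :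
    rename (fun p : ι × κ => (p.1, σ p.2)) (polarizedEsymm w k) = polarizedEsymm w k := by
  have hσ : (fun i => rename (fun p : ι × κ => (p.1, σ p.2)) (∑ j, C (w j) * X (j, i))) =
      (fun i => ∑ j, C (w j) * X (j, i)) ∘ σ := by
    ext1 i
    simp
  rw [polarizedEsymm, comp_aeval_apply (φ := rename _), hσ, ← aeval_rename, rename_esymm κ R k σ]

theorem eval_polarizedEsymm (w : ι → R) (k : ℕ) (u : ι × κ → R) :
    eval u (polarizedEsymm w k) = eval (fun i => w ⬝ᵥ fun j => u (j, i)) (esymm κ R k) := by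
  change aeval u (aeval _ (esymm κ R k)) = aeval _ (esymm κ R k)
  rw [comp_aeval_apply]
  simp [dotProduct]

end Polarization

theorem eval_polarizedEsymm_zmod_two {ι κ : Type*} [Fintype ι] [Fintype κ] [DecidableEq κ]
    (w : ι → ZMod 2) (k : ℕ) (u : ι × κ → ZMod 2) :
    eval u (polarizedEsymm w k) = (#{i | w ⬝ᵥ (fun j => u (j, i)) = 1}).choose k := by
  rw [eval_polarizedEsymm, ← eval_indicator_esymm]
  congr 2
  ext1 i
  simpa using ZMod.eq_ite_eq_one _

section DotProduct

variable {ι κ : Type*} [Fintype ι] [Fintype κ]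

theorem card_dotProduct_eq_of_card_dotProduct_eq_one {x y : κ → ι → ZMod 2}
    (h : ∀ w, #{i | w ⬝ᵥ x i = 1} = #{i | w ⬝ᵥ y i = 1}) (w : ι → ZMod 2) (b : ZMod 2) :
    #{i | w ⬝ᵥ x i = b} = #{i | w ⬝ᵥ y i = b} := by
  obtain rfl | rfl : b = 0 ∨ b = 1 := by revert b; decide
  · have hsplit (z : κ → ι → ZMod 2) :
        #{i | w ⬝ᵥ z i = 0} + #{i | w ⬝ᵥ z i = 1} = Fintype.card κ := by
      simpa only [ZMod.ne_zero_iff_eq_one, card_univ] using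
        card_filter_add_card_filter_not (s := univ) (fun i => w ⬝ᵥ z i = 0)
    have := hsplit x
    have := hsplit y
    have := h w
    omega
  · exact h w

variable [DecidableEq ι]

theorem two_mul_card_dotProduct_eq_zero {d : ι → ZMod 2} (hd : d ≠ 0) :
    2 * #{w | w ⬝ᵥ d = 0} = 2 ^ Fintype.card ι := by
  obtain ⟨j, hj⟩ := Function.ne_iff.mp hd
  let φ : (ι → ZMod 2) →+ ZMod 2 := AddMonoidHom.mk' (· ⬝ᵥ d) fun a b => add_dotProduct a b d
  have hfiber : #{w | φ w = 0} = #{w | φ w = 1} :=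
    AddMonoidHom.card_fiber_eq_of_mem_range φ ⟨0, zero_dotProduct d⟩
      ⟨Pi.single j 1, by simp [φ, ZMod.ne_zero_iff_eq_one.mp hj]⟩
  have hsplit := card_filter_add_card_filter_not (s := univ) (fun w => φ w = 0)
  simp only [ZMod.ne_zero_iff_eq_one, ← hfiber, card_univ, Fintype.card_fun, ZMod.card] at hsplit
  exact (two_mul _).trans hsplit

theorem two_mul_card_dotProduct_eq (x c : ι → ZMod 2) :
    2 * #{w | w ⬝ᵥ x = w ⬝ᵥ c} = if x = c then 2 * 2 ^ Fintype.card ι else 2 ^ Fintype.card ι := by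
  simp_rw [← sub_eq_zero (a := _ ⬝ᵥ x), ← dotProduct_sub, ← sub_eq_zero (a := x)]
  split_ifs with h
  · simp [h]
  · exact two_mul_card_dotProduct_eq_zero h


theorem two_mul_sum_card_dotProduct_eq (x : κ → ι → ZMod 2) (c : ι → ZMod 2) :
    2 * ∑ w : ι → ZMod 2, #{i | w ⬝ᵥ x i = w ⬝ᵥ c} =
      2 ^ Fintype.card ι * (Fintype.card κ + #{i | x i = c}) := by
  have hswap : ∑ w : ι → ZMod 2, #{i | w ⬝ᵥ x i = w ⬝ᵥ c} =
      ∑ i, #{w : ι → ZMod 2 | w ⬝ᵥ x i = w ⬝ᵥ c} := by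
    simp only [card_filter]
    exact sum_comm
  rw [hswap, mul_sum]
  simp_rw [two_mul_card_dotProduct_eq]
  rw [sum_ite, sum_const, sum_const, ← card_univ (α := κ),
    ← card_filter_add_card_filter_not (s := univ) (fun i => x i = c)]
  simp only [smul_eq_mul]
  ring

theorem card_eq_card_of_card_dotProduct_eq_one {x y : κ → ι → ZMod 2}
    (h : ∀ w, #{i | w ⬝ᵥ x i = 1} = #{i | w ⬝ᵥ y i = 1}) (c : ι → ZMod 2) :
    #{i | x i = c} = #{i | y i = c} := by
  have hx := two_mul_sum_card_dotProduct_eq x c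
  simp_rw [card_dotProduct_eq_of_card_dotProduct_eq_one h, two_mul_sum_card_dotProduct_eq] at hx
  have := Nat.eq_of_mul_eq_mul_left (by positivity) hx
  omega

end DotProduct

theorem isSepMulti_homInvMulti_two_pow_log (n m : ℕ) :
    IsSepMulti n m (HomInvMulti n m (2 ^ Nat.log 2 n)) := by
  intro u v huv
  by_contra! hsep
  have hle (x : Fin m × Fin n → ZMod 2) (w : Fin m → ZMod 2) :
      #{i | w ⬝ᵥ (fun j => x (j, i)) = 1} < 2 ^ (Nat.log 2 n + 1) :=
    ((card_filter_le _ _).trans_eq (card_fin n)).trans_lt (Nat.lt_pow_succ_log_self one_lt_two n)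
  have hweight (w : Fin m → ZMod 2) :
      #{i | w ⬝ᵥ (fun j => u (j, i)) = 1} = #{i | w ⬝ᵥ (fun j => v (j, i)) = 1} := by
    refine Nat.eq_of_forall_choose_two_pow_eq (hle u w) (hle v w) fun b hb => ?_
    rw [← eval_polarizedEsymm_zmod_two, ← eval_polarizedEsymm_zmod_two]
    exact hsep _ ⟨rename_polarizedEsymm w _, 2 ^ b, Nat.pow_le_pow_right two_pos hb,
      polarizedEsymm_isHomogeneous w _⟩
  obtain ⟨σ, hσ⟩ := exists_perm_comp_eq_of_card_fiber_eq
    (card_eq_card_of_card_dotProduct_eq_one hweight)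
  exact huv ⟨σ, fun p => congrFun (congrFun hσ p.2) p.1⟩

section ColumnSupport

variable {ι κ R : Type*} [DecidableEq κ]

def columnSupport (α : ι × κ →₀ ℕ) : Finset κ := α.support.image Prod.snd

theorem card_columnSupport_le_degree (α : ι × κ →₀ ℕ) : #(columnSupport α) ≤ α.degree := by
  calc #(columnSupport α) ≤ #α.support := card_image_le
    _ ≤ ∑ p ∈ α.support, α p := by
      simpa using card_nsmul_le_sum α.support α 1 fun p hp =>
        Nat.one_le_iff_ne_zero.mpr (Finsupp.mem_support_iff.mp hp)
    _ = α.degree := rfl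

theorem columnSupport_eq_empty_iff {α : ι × κ →₀ ℕ} : columnSupport α = ∅ ↔ α = 0 := by
  simp [columnSupport]

theorem columnSupport_mapDomain (σ : Equiv.Perm κ) (α : ι × κ →₀ ℕ) :
    columnSupport (α.mapDomain fun p => (p.1, σ p.2)) = (columnSupport α).image σ := by
  classical
  have hinj : Function.Injective fun p : ι × κ => (p.1, σ p.2) :=
    fun p q h => Prod.ext (Prod.ext_iff.mp h).1 (σ.injective (Prod.ext_iff.mp h).2)
  rw [columnSupport, columnSupport, Finsupp.mapDomain_support_of_injective hinj, image_image,
    image_image]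
  rfl

variable [CommSemiring R]

def columnIndicator (I : Finset κ) : ι × κ → R := fun p => if p.2 ∈ I then 1 else 0

theorem eval_columnIndicator (I : Finset κ) (f : MvPolynomial (ι × κ) R) :
    eval (columnIndicator I) f = ∑ α ∈ f.support with columnSupport α ⊆ I, coeff α f := by
  rw [eval_eq, sum_filter]
  refine sum_congr rfl fun α _ => ?_
  have hprod : ∏ p ∈ α.support, (columnIndicator I p : R) ^ α p =
      if columnSupport α ⊆ I then 1 else 0 := by
    rw [prod_congr rfl fun p hp => by
      rw [columnIndicator, ite_pow, one_pow, zero_pow (Finsupp.mem_support_iff.mp hp)], prod_boole]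
    exact if_congr image_subset_iff.symm rfl rfl
  rw [hprod, mul_ite, mul_one, mul_zero]

theorem eval_columnIndicator_eq_sum_powerset (I : Finset κ) (f : MvPolynomial (ι × κ) R) :
    eval (columnIndicator I) f =
      ∑ A ∈ I.powerset, ∑ α ∈ f.support with columnSupport α = A, coeff α f := by
  rw [eval_columnIndicator, ← sum_fiberwise_of_maps_to (t := I.powerset)
    fun α hα => mem_powerset.mpr (mem_filter.mp hα).2]
  refine sum_congr rfl fun A hA => ?_
  rw [filter_filter]
  refine sum_congr (filter_congr fun α _ => ?_) fun _ _ => rfl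
  exact ⟨And.right, fun h => ⟨h ▸ mem_powerset.mp hA, h⟩⟩

end ColumnSupport

section Invariant

variable {ι κ R : Type*} [DecidableEq κ] [CommSemiring R] {f : MvPolynomial (ι × κ) R}

theorem sum_coeff_columnSupport_eq_image
    (hf : ∀ σ : Equiv.Perm κ, rename (fun p : ι × κ => (p.1, σ p.2)) f = f)
    (σ : Equiv.Perm κ) (A : Finset κ) :
    ∑ α ∈ f.support with columnSupport α = A.image σ, coeff α f =
      ∑ α ∈ f.support with columnSupport α = A, coeff α f := by
  classical
  have hg : Function.Injective fun p : ι × κ => (p.1, σ p.2) :=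
    Function.injective_id.prodMap σ.injective
  have hsupp : f.support.image (Finsupp.mapDomain fun p : ι × κ => (p.1, σ p.2)) = f.support := by
    rw [← support_rename_of_injective hg, hf]
  conv_lhs => rw [← hsupp]
  rw [filter_image, sum_image (Finsupp.mapDomain_injective hg).injOn]
  refine sum_congr ?_ fun α _ => ?_
  · simp only [columnSupport_mapDomain, (image_injective σ.injective).eq_iff]
  · simpa only [hf] using coeff_rename_mapDomain _ hg f α

theorem sum_coeff_columnSupport_eq_of_card_eq
    (hf : ∀ σ : Equiv.Perm κ, rename (fun p : ι × κ => (p.1, σ p.2)) f = f)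
    {A B : Finset κ} (h : #A = #B) :
    ∑ α ∈ f.support with columnSupport α = A, coeff α f =
      ∑ α ∈ f.support with columnSupport α = B, coeff α f := by
  obtain ⟨σ, rfl⟩ := exists_perm_image_eq h
  exact (sum_coeff_columnSupport_eq_image hf σ A).symm

theorem card_columnSupport_mem_Ioc {e : ℕ} (hhom : f.IsHomogeneous e) (he : e ≠ 0)
    {α : ι × κ →₀ ℕ} (hα : α ∈ f.support) : #(columnSupport α) ∈ Set.Ioc 0 e := by
  have hdeg : α.degree = e := by
    by_contra hne
    exact mem_support_iff.mp hα (hhom.coeff_eq_zero hne)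
  refine ⟨card_pos.mpr (nonempty_iff_ne_empty.mpr fun h => he ?_),
    hdeg ▸ card_columnSupport_le_degree α⟩
  rw [← hdeg, columnSupport_eq_empty_iff.mp h, map_zero]

theorem eval_columnIndicator_eq_zero [CharP R 2]
    (hf : ∀ σ : Equiv.Perm κ, rename (fun p : ι × κ => (p.1, σ p.2)) f = f)
    {e t : ℕ} (hhom : f.IsHomogeneous e) (he : e ≠ 0) (het : e < 2 ^ t)
    {I : Finset κ} (hI : #I = 2 ^ t) :
    eval (columnIndicator I) f = 0 := by
  rw [eval_columnIndicator_eq_sum_powerset, sum_powerset]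
  refine sum_eq_zero fun j _ => ?_
  obtain hempty | ⟨A₀, hA₀⟩ := (powersetCard j I).eq_empty_or_nonempty
  · rw [hempty, sum_empty]
  obtain ⟨-, hA₀j⟩ := mem_powersetCard.mp hA₀
  rw [sum_eq_card_nsmul fun A hA => sum_coeff_columnSupport_eq_of_card_eq hf
    ((mem_powersetCard.mp hA).2.trans hA₀j.symm), card_powersetCard, hI]
  by_cases hj : j ∈ Set.Ioc 0 e
  · obtain ⟨q, hq⟩ := Nat.prime_two.dvd_choose_pow hj.1.ne' (hj.2.trans_lt het).ne
    rw [hq, nsmul_eq_mul, Nat.cast_mul, CharP.cast_eq_zero, zero_mul, zero_mul]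
  · rw [sum_eq_zero fun α hα => ?_, smul_zero]
    obtain ⟨hα, hcols⟩ := mem_filter.mp hα
    have hcard := card_columnSupport_mem_Ioc hhom he hα
    rw [hcols, hA₀j] at hcard
    exact (hj hcard).elim

end Invariant

theorem not_isSepMulti_homInvMulti_of_lt {n m d : ℕ} (hm : 1 ≤ m) (hn : 1 ≤ n)
    (hd : d < 2 ^ Nat.log 2 n) : ¬ IsSepMulti n m (HomInvMulti n m d) := by
  obtain ⟨I, -, hI⟩ := exists_subset_card_eq (s := (univ : Finset (Fin n)))
    (n := 2 ^ Nat.log 2 n) (by simpa using Nat.pow_log_le_self 2 (by omega : n ≠ 0))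
  have horbit : ¬ ∃ σ : Equiv.Perm (Fin n),
      ∀ p : Fin m × Fin n, columnIndicator I (p.1, σ p.2) = (0 : Fin m × Fin n → ZMod 2) p := by
    rintro ⟨σ, hσ⟩
    obtain ⟨i, hi⟩ := card_pos.mp (hI ▸ Nat.two_pow_pos _)
    simpa [columnIndicator, hi] using hσ (⟨0, hm⟩, σ.symm i)
  intro hsep
  obtain ⟨f, ⟨hf, e, hed, hhom⟩, hne⟩ := hsep _ _ horbit
  apply hne
  rcases eq_or_ne e 0 with rfl | he
  · rw [totalDegree_eq_zero_iff_eq_C.mp (Nat.le_zero.mp hhom.totalDegree_le), eval_C, eval_C]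
  · rw [eval_columnIndicator_eq_zero hf hhom he (hed.trans_lt hd) hI, eval_zero,
      constantCoeff_eq, hhom.coeff_eq_zero (by simpa using he.symm)]

/-- for `F = F_2`, `m ≥ 1` and `n ≥ 2`,
`β_sep(F_2[V^m]^{S_n}) = 2^{⌊log_2 n⌋}`: the homogeneous invariants of degree at most
`2^{⌊log_2 n⌋}` separate the `S_n`-orbits on `V^m`, and no smaller bound suffices. -/
theorem stmt18 (n m : ℕ) (hm : 1 ≤ m) (hn : 2 ≤ n) :
    IsSepMulti n m (HomInvMulti n m (2 ^ Nat.log 2 n)) ∧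
    ∀ d < 2 ^ Nat.log 2 n, ¬ IsSepMulti n m (HomInvMulti n m d) :=
  ⟨isSepMulti_homInvMulti_two_pow_log n m,
    fun _ hd => not_isSepMulti_homInvMulti_of_lt hm (by omega) hd⟩
end

section
/- Over F_2, if the elementary symmetric polynomial s_t separates e_a and e_b for some 1 ≤ t ≤ n and 0 ≤ a, b ≤ n, then there exists r ≥ 0 with 2^r ≤ t such that s_{2^r} separates e_a and e_b. Equivalently, if C(a,t) ≢ C(b,t) (mod 2), then there exists r ≥ 0 with 2^r ≤ t such that C(a,2^r) ≢ C(b,2^r) (mod 2). -/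
open MvPolynomial

/-- `e_i ∈ F_2^n`: the vector whose first `i` coordinates are `1` and the rest `0`. -/
def eVec (n i : ℕ) : Fin n → ZMod 2 := fun j => if (j : ℕ) < i then 1 else 0

/-!
By Lucas's theorem, `C(a, t) mod p` depends only on the base-`p` digits of `a` at the positions
`i` with `p ^ i ≤ t`, and the digit of `a` at position `r` is `C(a, p ^ r) mod p`. So if all the
`C(·, p ^ r)` with `p ^ r ≤ t` agree at `a` and `b`, so does `C(·, t)`. Evaluating `s_t` at `e_i`
counts the `t`-subsets of the first `i` coordinates, which gives `C(i, t)`.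
-/

namespace Nat

variable {p : ℕ} [Fact p.Prime]

theorem choose_prime_pow_modEq_div (n r : ℕ) : n.choose (p ^ r) ≡ n / p ^ r [MOD p] := by
  induction r generalizing n with
  | zero => simpa using Nat.ModEq.refl n
  | succ r ih =>
    have hp : 0 < p := (Fact.out : p.Prime).pos
    calc n.choose (p ^ (r + 1))
        ≡ (n % p).choose (p ^ (r + 1) % p) * (n / p).choose (p ^ (r + 1) / p) [MOD p] :=
          Choose.choose_modEq_choose_mod_mul_choose_div_nat
      _ = (n / p).choose (p ^ r) := by
          rw [pow_succ, Nat.mul_mod_left, Nat.mul_div_cancel _ hp, choose_zero_right, one_mul]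
      _ ≡ n / p / p ^ r [MOD p] := ih _
      _ = n / p ^ (r + 1) := by rw [Nat.div_div_eq_div_mul, pow_succ']

theorem choose_modEq_choose_of_digits_eq {a b k : ℕ}
    (h : ∀ i, p ^ i ≤ k → a / p ^ i % p = b / p ^ i % p) :
    a.choose k ≡ b.choose k [MOD p] := by
  have hp : 1 < p := (Fact.out : p.Prime).one_lt
  set A := a + b + k
  have lt_pow : ∀ m ≤ A, m < p ^ A := fun m hm => hm.trans_lt (Nat.lt_pow_self hp)
  have hk : k < p ^ A := lt_pow k le_add_self
  calc a.choose k
      ≡ ∏ i ∈ Finset.range A, (a / p ^ i % p).choose (k / p ^ i % p) [MOD p] :=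
        Choose.choose_modEq_prod_range_choose_nat (lt_pow a (by omega)) hk
    _ = ∏ i ∈ Finset.range A, (b / p ^ i % p).choose (k / p ^ i % p) := by
        refine Finset.prod_congr rfl fun i _ => ?_
        rcases le_or_gt (p ^ i) k with hik | hki
        · rw [h i hik]
        · rw [Nat.div_eq_of_lt hki, Nat.zero_mod, choose_zero_right, choose_zero_right]
    _ ≡ b.choose k [MOD p] :=
        (Choose.choose_modEq_prod_range_choose_nat (lt_pow b (by omega)) hk).symm

theorem exists_prime_pow_not_modEq_choose {a b t : ℕ}
    (h : ¬ a.choose t ≡ b.choose t [MOD p]) :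
    ∃ r, p ^ r ≤ t ∧ ¬ a.choose (p ^ r) ≡ b.choose (p ^ r) [MOD p] := by
  by_contra! hall
  refine h (choose_modEq_choose_of_digits_eq fun r hr => ?_)
  exact (choose_prime_pow_modEq_div a r).symm.trans
    ((hall r hr).trans (choose_prime_pow_modEq_div b r))

end Nat

namespace MvPolynomial

theorem eval_boole_esymm {σ R : Type*} [Fintype σ] [CommSemiring R] (P : σ → Prop)
    [DecidablePred P] (t : ℕ) :
    eval (fun j => if P j then 1 else 0) (esymm σ R t) =
      ((Finset.univ.filter P).card.choose t : R) := by
  simp only [esymm, map_sum, map_prod, eval_X, Finset.prod_boole, Finset.sum_ite,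
    Finset.sum_const_zero, add_zero, Finset.sum_const, nsmul_one, ← Finset.card_powersetCard]
  congr 2
  ext S
  simp [Finset.subset_iff, and_comm]

end MvPolynomial

theorem eval_eVec_esymm {n i : ℕ} (hi : i ≤ n) (t : ℕ) :
    eval (eVec n i) (esymm (Fin n) (ZMod 2) t) = (i.choose t : ZMod 2) := by
  unfold eVec
  rw [eval_boole_esymm, Fin.card_filter_val_lt, min_eq_right hi]

theorem stmt19_general (n t a b : ℕ) (ha : a ≤ n) (hb : b ≤ n) :
    (eval (eVec n a) (esymm (Fin n) (ZMod 2) t) ≠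
        eval (eVec n b) (esymm (Fin n) (ZMod 2) t) →
      ∃ r, 2 ^ r ≤ t ∧
        eval (eVec n a) (esymm (Fin n) (ZMod 2) (2 ^ r)) ≠
          eval (eVec n b) (esymm (Fin n) (ZMod 2) (2 ^ r))) ∧
    (Nat.choose a t % 2 ≠ Nat.choose b t % 2 →
      ∃ r, 2 ^ r ≤ t ∧ Nat.choose a (2 ^ r) % 2 ≠ Nat.choose b (2 ^ r) % 2) := by
  refine ⟨?_, Nat.exists_prime_pow_not_modEq_choose⟩
  simp only [eval_eVec_esymm ha, eval_eVec_esymm hb, ne_eq, ZMod.natCast_eq_natCast_iff]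
  exact Nat.exists_prime_pow_not_modEq_choose

/-- over `F_2`, if `s_t` separates `e_a` and `e_b` (`1 ≤ t ≤ n`,
`0 ≤ a, b ≤ n`), then some `s_{2^r}` with `2^r ≤ t` separates them; equivalently,
if `C(a,t) ≢ C(b,t) (mod 2)` then `C(a,2^r) ≢ C(b,2^r) (mod 2)` for some `2^r ≤ t`. -/
theorem stmt19 (n t a b : ℕ) (ht1 : 1 ≤ t) (htn : t ≤ n) (ha : a ≤ n) (hb : b ≤ n) :
    (eval (eVec n a) (esymm (Fin n) (ZMod 2) t) ≠
        eval (eVec n b) (esymm (Fin n) (ZMod 2) t) →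
      ∃ r, 2 ^ r ≤ t ∧
        eval (eVec n a) (esymm (Fin n) (ZMod 2) (2 ^ r)) ≠
          eval (eVec n b) (esymm (Fin n) (ZMod 2) (2 ^ r))) ∧
    (Nat.choose a t % 2 ≠ Nat.choose b t % 2 →
      ∃ r, 2 ^ r ≤ t ∧ Nat.choose a (2 ^ r) % 2 ≠ Nat.choose b (2 ^ r) % 2) :=
  stmt19_general n t a b ha hb
end
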